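/- If X and Y are independent real random variables each converging weakly to standard Gaussians after normalization, i.e. (X_n − a_n)/s_n ⇒ N(0,1) and (Y_n − b_n)/t_n ⇒ N(0,1) with X_n, Y_n independent, then (X_n − Y_n − (a_n − b_n))/√(s_n² + t_n²) ⇒ N(0,1), provided s_n/√(s_n²+t_n²) converges to some c ∈ [0,1]. -/

import Mathlib

/-!
With `r = √(s² + t²)`, the statistic `(X - Y - (a - b)) / r` equals `p U - q V`, where
`U = (X - a) / s` and `V = (Y - b) / t` converge in distribution to `N(0,1)`, `p = s / r → c` and
`q = t / r = √(1 - p²) → √(1 - c²)`. By independence the law of `(U, V)` is the product of the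
laws of `U` and `V`, and the product of probability measures is weakly continuous, so
`(U, V) ⇒ N(0,1) ⊗ N(0,1)`. Slutsky's theorem and the continuous mapping theorem then give
`p U - q V ⇒ c Z₁ - √(1 - c²) Z₂ ~ N(0, c² + (1 - c²)) = N(0,1)`. On `ℝ`, convergence of the
distribution functions at every point is equivalent to weak convergence when the limit has no
atoms, which is how the hypotheses and the conclusion are read.
-/

open Filter MeasureTheory ProbabilityTheory

noncomputable def stdNormalCDF (t : ℝ) : ℝ :=
  ((gaussianReal 0 1) (Set.Iic t)).toReal

open Set Topology
open scoped NNReal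

namespace MeasureTheory

lemma measureReal_Ioc_eq_sub (ν : Measure ℝ) [IsFiniteMeasure ν] {a b : ℝ} (hab : a ≤ b) :
    ν.real (Ioc a b) = ν.real (Iic b) - ν.real (Iic a) := by
  rw [← Iic_union_Ioc_eq_Iic hab, measureReal_union (Iic_disjoint_Ioc le_rfl) measurableSet_Ioc]
  ring

namespace ProbabilityMeasure

/-- The half-open intervals form a π-system containing arbitrarily small neighbourhoods of every
point, and their masses are differences of distribution functions. -/
theorem tendsto_of_forall_tendsto_measureReal_Iic {μs : ℕ → ProbabilityMeasure ℝ}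
    {ν : ProbabilityMeasure ℝ}
    (h : ∀ x, Tendsto (fun n ↦ (μs n : Measure ℝ).real (Iic x)) atTop
      (𝓝 ((ν : Measure ℝ).real (Iic x)))) :
    Tendsto μs atTop (𝓝 ν) := by
  refine (isPiSystem_Ioc id id).tendsto_probabilityMeasure_of_tendsto_of_mem ?_ ?_ ?_
  · rintro _ ⟨a, b, -, rfl⟩
    exact measurableSet_Ioc
  · intro u hu x hx
    obtain ⟨ε, hε, hball⟩ := Metric.isOpen_iff.1 hu x hx
    refine ⟨Ioc (x - ε / 2) (x + ε / 2), ⟨_, _, show x - ε / 2 < x + ε / 2 by linarith, rfl⟩,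
      Ioc_mem_nhds (by linarith) (by linarith), fun y hy ↦ hball ?_⟩
    rw [Metric.mem_ball, Real.dist_eq, abs_lt]
    constructor <;> linarith [hy.1, hy.2]
  · rintro _ ⟨a, b, hab, rfl⟩
    rw [← NNReal.tendsto_coe]
    simp only [ProbabilityMeasure.coeFn_def, ENNReal.coe_toNNReal_eq_toReal, ← measureReal_def]
    dsimp only [id] at hab ⊢
    rw [measureReal_Ioc_eq_sub _ hab.le]
    exact ((h b).sub (h a)).congr fun n ↦ (measureReal_Ioc_eq_sub _ hab.le).symm

theorem tendsto_measureReal_Iic_of_tendsto {ι : Type*} {l : Filter ι}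
    {μs : ι → ProbabilityMeasure ℝ} {ν : ProbabilityMeasure ℝ} (h : Tendsto μs l (𝓝 ν))
    {x : ℝ} (hx : (ν : Measure ℝ) {x} = 0) :
    Tendsto (fun n ↦ (μs n : Measure ℝ).real (Iic x)) l (𝓝 ((ν : Measure ℝ).real (Iic x))) :=
  (ENNReal.tendsto_toReal (measure_ne_top _ _)).comp
    (tendsto_measure_of_null_frontier_of_tendsto' h (by rwa [frontier_Iic]))

end ProbabilityMeasure

namespace Measure

variable {Ω' Ω'' E : Type*} {mΩ' : MeasurableSpace Ω'} {mΩ'' : MeasurableSpace Ω''}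
  [MeasurableSpace E] {μ' : Measure Ω'} {μ'' : Measure Ω''}

lemma map_comp_fst_prod [IsProbabilityMeasure μ''] {Z : Ω' → E} (hZ : AEMeasurable Z μ') :
    (μ'.prod μ'').map (fun p ↦ Z p.1) = μ'.map Z := by
  have h := (measurePreserving_fst (μ := μ') (ν := μ'')).map_eq
  rw [← h] at hZ
  rw [← Function.comp_def, ← hZ.map_map_of_aemeasurable measurable_fst.aemeasurable, h]

lemma map_comp_snd_prod [IsProbabilityMeasure μ'] [SFinite μ''] {W : Ω'' → E}
    (hW : AEMeasurable W μ'') : (μ'.prod μ'').map (fun p ↦ W p.2) = μ''.map W := by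
  have h := (measurePreserving_snd (μ := μ') (ν := μ'')).map_eq
  rw [← h] at hW
  rw [← Function.comp_def, ← hW.map_map_of_aemeasurable measurable_snd.aemeasurable, h]

end Measure

section TendstoInDistribution

variable {Ω Ω' Ω'' : Type*} {mΩ : MeasurableSpace Ω} {mΩ' : MeasurableSpace Ω'}
  {mΩ'' : MeasurableSpace Ω''} {μ : Measure Ω} [IsProbabilityMeasure μ]
  {μ' : Measure Ω'} [IsProbabilityMeasure μ'] {μ'' : Measure Ω''} [IsProbabilityMeasure μ'']

theorem tendstoInDistribution_id_of_forall_tendsto_measureReal_le {X : ℕ → Ω → ℝ}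
    {ν : Measure ℝ} [IsProbabilityMeasure ν] (hX : ∀ n, AEMeasurable (X n) μ)
    (h : ∀ x, Tendsto (fun n ↦ μ.real {ω | X n ω ≤ x}) atTop (𝓝 (ν.real (Iic x)))) :
    TendstoInDistribution X atTop id (fun _ ↦ μ) ν where
  forall_aemeasurable := hX
  tendsto := by
    refine ProbabilityMeasure.tendsto_of_forall_tendsto_measureReal_Iic fun x ↦ ?_
    simp only [ProbabilityMeasure.coe_mk, Measure.map_id,
      map_measureReal_apply_of_aemeasurable (hX _) measurableSet_Iic]
    exact h x

theorem TendstoInDistribution.tendsto_measureReal_le {ι : Type*} {l : Filter ι}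
    {X : ι → Ω → ℝ} {Z : Ω' → ℝ} {ν : Measure ℝ}
    (h : TendstoInDistribution X l Z (fun _ ↦ μ) μ') (hZ : μ'.map Z = ν) {x : ℝ}
    (hx : ν {x} = 0) :
    Tendsto (fun i ↦ μ.real {ω | X i ω ≤ x}) l (𝓝 (ν.real (Iic x))) := by
  subst hZ
  have h_cdf := ProbabilityMeasure.tendsto_measureReal_Iic_of_tendsto h.tendsto hx
  simp only [ProbabilityMeasure.coe_mk,
    map_measureReal_apply_of_aemeasurable (h.forall_aemeasurable _) measurableSet_Iic] at h_cdf
  exact h_cdf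

theorem TendstoInDistribution.prodMk_of_indepFun {ι E F : Type*} {l : Filter ι}
    [TopologicalSpace E] [MeasurableSpace E] [BorelSpace E] [SecondCountableTopology E]
    [TopologicalSpace.PseudoMetrizableSpace E]
    [TopologicalSpace F] [MeasurableSpace F] [BorelSpace F] [SecondCountableTopology F]
    [TopologicalSpace.PseudoMetrizableSpace F]
    {X : ι → Ω → E} {Y : ι → Ω → F} {Z : Ω' → E} {W : Ω'' → F}
    (hX : TendstoInDistribution X l Z (fun _ ↦ μ) μ')
    (hY : TendstoInDistribution Y l W (fun _ ↦ μ) μ'')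
    (hXY : ∀ i, IndepFun (X i) (Y i) μ) :
    TendstoInDistribution (fun i ω ↦ (X i ω, Y i ω)) l (fun p ↦ (Z p.1, W p.2))
      (fun _ ↦ μ) (μ'.prod μ'') where
  forall_aemeasurable i := (hX.forall_aemeasurable i).prodMk (hY.forall_aemeasurable i)
  aemeasurable_limit := hX.aemeasurable_limit.comp_fst.prodMk hY.aemeasurable_limit.comp_snd
  tendsto := by
    have h_seq i : μ.map (fun ω ↦ (X i ω, Y i ω)) = (μ.map (X i)).prod (μ.map (Y i)) :=
      (indepFun_iff_map_prod_eq_prod_map_map (hX.forall_aemeasurable i)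
        (hY.forall_aemeasurable i)).1 (hXY i)
    have h_lim : (μ'.prod μ'').map (fun p ↦ (Z p.1, W p.2)) = (μ'.map Z).prod (μ''.map W) := by
      rw [(indepFun_iff_map_prod_eq_prod_map_map hX.aemeasurable_limit.comp_fst
          hY.aemeasurable_limit.comp_snd).1
          (indepFun_prod₀ hX.aemeasurable_limit hY.aemeasurable_limit),
        Measure.map_comp_fst_prod hX.aemeasurable_limit,
        Measure.map_comp_snd_prod hY.aemeasurable_limit]
    simp only [h_seq, h_lim]
    exact (ProbabilityMeasure.continuous_prod.tendsto _).comp (hX.tendsto.prodMk_nhds hY.tendsto)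

end TendstoInDistribution

end MeasureTheory

namespace ProbabilityTheory

lemma gaussianReal_prod_map_const_mul_add_const_mul {m₁ m₂ : ℝ} {v₁ v₂ : ℝ≥0} (c d : ℝ) :
    ((gaussianReal m₁ v₁).prod (gaussianReal m₂ v₂)).map (fun p ↦ c * p.1 + d * p.2) =
      gaussianReal (c * m₁ + d * m₂)
        (.mk (c ^ 2) (sq_nonneg _) * v₁ + .mk (d ^ 2) (sq_nonneg _) * v₂) := by
  rw [← gaussianReal_conv_gaussianReal, ← gaussianReal_map_const_mul,
    ← gaussianReal_map_const_mul, Measure.conv,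
    Measure.map_prod_map _ _ (measurable_const_mul c) (measurable_const_mul d),
    Measure.map_map (by fun_prop) (by fun_prop)]
  rfl

variable {Ω : Type*} {mΩ : MeasurableSpace Ω} {μ : Measure Ω} [IsProbabilityMeasure μ]

theorem tendsto_measureReal_mul_add_mul_le_of_indepFun {U V : ℕ → Ω → ℝ} {p q : ℕ → ℝ}
    {c d : ℝ} (hmU : ∀ n, AEMeasurable (U n) μ) (hmV : ∀ n, AEMeasurable (V n) μ)
    (hUV : ∀ n, IndepFun (U n) (V n) μ)
    (hU : ∀ x, Tendsto (fun n ↦ μ.real {ω | U n ω ≤ x}) atTop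
      (𝓝 ((gaussianReal 0 1).real (Iic x))))
    (hV : ∀ x, Tendsto (fun n ↦ μ.real {ω | V n ω ≤ x}) atTop
      (𝓝 ((gaussianReal 0 1).real (Iic x))))
    (hp : Tendsto p atTop (𝓝 c)) (hq : Tendsto q atTop (𝓝 d)) (hcd : c ^ 2 + d ^ 2 = 1)
    (x : ℝ) :
    Tendsto (fun n ↦ μ.real {ω | p n * U n ω + q n * V n ω ≤ x}) atTop
      (𝓝 ((gaussianReal 0 1).real (Iic x))) := by
  have hpair := TendstoInDistribution.prodMk_of_indepFun
    (tendstoInDistribution_id_of_forall_tendsto_measureReal_le hmU hU)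
    (tendstoInDistribution_id_of_forall_tendsto_measureReal_le hmV hV) hUV
  have hcoef : TendstoInMeasure μ (fun n _ ↦ (p n, q n)) atTop (fun _ ↦ (c, d)) :=
    tendstoInMeasure_of_tendsto_ae (fun _ ↦ aestronglyMeasurable_const)
      (ae_of_all _ fun _ ↦ hp.prodMk_nhds hq)
  have hlaw : ((gaussianReal 0 1).prod (gaussianReal 0 1)).map (fun z ↦ c * z.1 + d * z.2) =
      gaussianReal 0 1 := by
    rw [gaussianReal_prod_map_const_mul_add_const_mul]
    congr 1
    · ring
    · ext
      simpa using hcd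
  exact (hpair.continuous_comp_prodMk_of_tendstoInMeasure_const
    (g := fun z : (ℝ × ℝ) × ℝ × ℝ ↦ z.2.1 * z.1.1 + z.2.2 * z.1.2) (by fun_prop) hcoef
    fun _ ↦ aemeasurable_const).tendsto_measureReal_le hlaw
    ((nullSingletonClass_gaussianReal one_ne_zero).measure_singleton x)

end ProbabilityTheory

lemma div_sqrt_sq_add_sq_eq_sqrt_one_sub {s t : ℝ} (ht : 0 < t) :
    t / √(s ^ 2 + t ^ 2) = √(1 - (s / √(s ^ 2 + t ^ 2)) ^ 2) := by
  rw [← Real.sqrt_sq (div_nonneg ht.le (Real.sqrt_nonneg _)), div_pow, div_pow,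
    Real.sq_sqrt (by positivity)]
  congr 1
  field_simp
  ring

theorem diff_of_asymptotically_gaussian {Ω : Type*} [MeasurableSpace Ω]
    (μ : Measure Ω) [IsProbabilityMeasure μ]
    (X Y : ℕ → Ω → ℝ) (a b s t : ℕ → ℝ) (c : ℝ)
    (hmX : ∀ n, Measurable (X n)) (hmY : ∀ n, Measurable (Y n))
    (hs : ∀ n, 0 < s n) (ht : ∀ n, 0 < t n)
    (hindep : ∀ n, IndepFun (X n) (Y n) μ)
    (hX : ∀ u : ℝ, Tendsto (fun n => (μ {ω | (X n ω - a n) / s n ≤ u}).toReal)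
      atTop (nhds (stdNormalCDF u)))
    (hY : ∀ u : ℝ, Tendsto (fun n => (μ {ω | (Y n ω - b n) / t n ≤ u}).toReal)
      atTop (nhds (stdNormalCDF u)))
    (hc : Tendsto (fun n => s n / Real.sqrt ((s n)^2 + (t n)^2)) atTop (nhds c))
    (hc01 : c ∈ Set.Icc (0:ℝ) 1) :
    ∀ u : ℝ, Tendsto (fun n =>
        (μ {ω | (X n ω - Y n ω - (a n - b n)) / Real.sqrt ((s n)^2 + (t n)^2) ≤ u}).toReal)
      atTop (nhds (stdNormalCDF u)) := by
  intro u
  have hq : Tendsto (fun n ↦ -(t n / √(s n ^ 2 + t n ^ 2))) atTop (𝓝 (-√(1 - c ^ 2))) := by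
    simp only [div_sqrt_sq_add_sq_eq_sqrt_one_sub (ht _)]
    exact ((hc.pow 2).const_sub 1).sqrt.neg
  have hcd : c ^ 2 + (-√(1 - c ^ 2)) ^ 2 = 1 := by
    rw [neg_sq, Real.sq_sqrt (by nlinarith [hc01.1, hc01.2])]
    ring
  have hstandardize n ω : (X n ω - Y n ω - (a n - b n)) / √(s n ^ 2 + t n ^ 2) =
      s n / √(s n ^ 2 + t n ^ 2) * ((X n ω - a n) / s n) +
        -(t n / √(s n ^ 2 + t n ^ 2)) * ((Y n ω - b n) / t n) := by
    have := (hs n).ne'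
    have := (ht n).ne'
    field_simp
    ring
  simp only [hstandardize]
  exact tendsto_measureReal_mul_add_mul_le_of_indepFun (fun n ↦ by fun_prop) (fun n ↦ by fun_prop)
    (fun n ↦ (hindep n).comp (φ := fun x ↦ (x - a n) / s n) (ψ := fun y ↦ (y - b n) / t n)
      (by fun_prop) (by fun_prop)) hX hY hc hq hcd u
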